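/- arXiv:2208.04861 — 2 statements merged into one kernel-verified Lean document; each statement's English description precedes it below -/
import Mathlib

section
/- Let X ⊆ Y be a C-contracting closed subset. Suppose a sequence y_n ∈ Y converges to a point η ∈ ∂_hY, and that points x_n ∈ π_X(y_n) converge to a point ξ ∈ ∂_hY. Then ‖b_ξ − b_η‖_∞ ≤ 4C. -/
open Metric Filter Topology Set MeasureTheory Pointwise

noncomputable section

namespace ConfDyn

/-- `γ` is (the image of) a geodesic segment from `x` to `y`. -/
def IsGeodesicIn (Y : Type*) [MetricSpace Y] (γ : Set Y) (x y : Y) : Prop :=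
  ∃ f : ℝ → Y, f 0 = x ∧ f (dist x y) = y ∧
    (∀ s ∈ Set.Icc (0 : ℝ) (dist x y), ∀ t ∈ Set.Icc (0 : ℝ) (dist x y),
      dist (f s) (f t) = |s - t|) ∧
    γ = f '' Set.Icc (0 : ℝ) (dist x y)

/-- `Y` is a geodesic metric space. -/
def GeodesicSpace (Y : Type*) [MetricSpace Y] : Prop :=
  ∀ x y : Y, ∃ γ : Set Y, IsGeodesicIn Y γ x y

/-- the shortest projection of the point `y` to the subset `X`. -/
def projSet {Y : Type*} [MetricSpace Y] (X : Set Y) (y : Y) : Set Y :=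
  {x ∈ X | dist y x = Metric.infDist y X}

/-- the shortest projection of the subset `A` to the subset `X`. -/
def projSetOf {Y : Type*} [MetricSpace Y] (X A : Set Y) : Set Y :=
  ⋃ a ∈ A, projSet X a

/-- `d_X(x,y)`, the diameter of `π_X(x) ∪ π_X(y)`. -/
def projDist {Y : Type*} [MetricSpace Y] (X : Set Y) (x y : Y) : ENNReal :=
  EMetric.diam (projSet X x ∪ projSet X y)

/-- `X` is a `C`-contracting subset: any geodesic segment at distance at least `C`
from `X` has shortest projection to `X` of diameter at most `C`. -/
def IsContractingSet {Y : Type*} [MetricSpace Y] (C : ℝ) (X : Set Y) : Prop :=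
  ∀ x y : Y, ∀ γ : Set Y, IsGeodesicIn Y γ x y →
    (∀ p ∈ γ, C ≤ Metric.infDist p X) →
    EMetric.diam (projSetOf X γ) ≤ ENNReal.ofReal C

/-- the Busemann function based at `o` associated to `y`, `b_y(x) = d(x,y) - d(o,y)`. -/
def busemannCM {Y : Type*} [MetricSpace Y] (o y : Y) : C(Y, ℝ) :=
  ⟨fun x => dist x y - dist o y,
    (continuous_id.dist continuous_const).sub continuous_const⟩

/-- the horofunction compactification of `Y`: the closure of `{b_y : y ∈ Y}` in
`C(Y,ℝ)` with the compact-open topology. -/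
def horoCpt (Y : Type*) [MetricSpace Y] (o : Y) : Set C(Y, ℝ) :=
  closure (Set.range (busemannCM o))

/-- `ξ` is a point of the horofunction boundary `∂_h Y`. -/
def IsHoroPoint {Y : Type*} [MetricSpace Y] (o : Y) (ξ : C(Y, ℝ)) : Prop :=
  ξ ∈ horoCpt Y o ∧ ∀ y : Y, ξ ≠ busemannCM o y

/-- a sequence of points of `Y` converges to `ξ` in the horofunction compactification. -/
def HoroConv {Y : Type*} [MetricSpace Y] (o : Y) (u : ℕ → Y) (ξ : C(Y, ℝ)) : Prop :=
  Filter.Tendsto (fun n => busemannCM o (u n)) atTop (nhds ξ)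

/-- two horofunctions have (K-)finite difference for some K. -/
def FinDiff {Y : Type*} [MetricSpace Y] (ξ η : C(Y, ℝ)) : Prop :=
  ∃ K : ℝ, ∀ z : Y, |ξ z - η z| ≤ K

/-- the locus of a subset of the horofunction boundary. -/
def locus {Y : Type*} [MetricSpace Y] (o : Y) (Λ : Set C(Y, ℝ)) : Set C(Y, ℝ) :=
  {η | IsHoroPoint o η ∧ ∃ ξ ∈ Λ, FinDiff ξ η}

/-- the finite-difference relation as a setoid on `C(Y,ℝ)`. -/
def finDiffSetoid (Y : Type*) [MetricSpace Y] : Setoid C(Y, ℝ) where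
  r := FinDiff
  iseqv := ⟨fun ξ => ⟨0, fun z => by simp⟩,
    fun h => h.imp (fun K hK z => by rw [abs_sub_comm]; exact hK z),
    fun h₁ h₂ => by
      obtain ⟨K₁, hK₁⟩ := h₁
      obtain ⟨K₂, hK₂⟩ := h₂
      exact ⟨K₁ + K₂, fun z => (abs_sub_le _ _ _).trans (add_le_add (hK₁ z) (hK₂ z))⟩⟩

/-- the limit set of a subset `X ⊆ Y` in the horofunction boundary. -/
def limitSetOf {Y : Type*} [MetricSpace Y] (o : Y) (X : Set Y) : Set C(Y, ℝ) :=
  {ξ | IsHoroPoint o ξ ∧ ∃ u : ℕ → Y, (∀ n, u n ∈ X) ∧ HoroConv o u ξ}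

/-- accumulation points of a sequence of points of `Y` in the horofunction boundary. -/
def accPoints {Y : Type*} [MetricSpace Y] (o : Y) (u : ℕ → Y) : Set C(Y, ℝ) :=
  {ξ | IsHoroPoint o ξ ∧ ∃ φ : ℕ → ℕ, StrictMono φ ∧ HoroConv o (u ∘ φ) ξ}

/-- `X` is a quasi-geodesic: the image of a quasi-isometric embedding of a real interval. -/
def IsQuasiGeodesicSet {Y : Type*} [MetricSpace Y] (X : Set Y) : Prop :=
  ∃ (c : ℝ) (I : Set ℝ) (φ : ℝ → Y), 1 ≤ c ∧ I.OrdConnected ∧ X = φ '' I ∧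
    ∀ s ∈ I, ∀ t ∈ I,
      (1 / c) * |s - t| - c ≤ dist (φ s) (φ t) ∧ dist (φ s) (φ t) ≤ c * |s - t| + c

section GroupAction

variable {Y : Type*} [MetricSpace Y] {G : Type*} [Group G] [MulAction G Y]

/-- `G` acts by isometries on `Y`. -/
def IsometricAction (G Y : Type*) [Group G] [MulAction G Y] [MetricSpace Y] : Prop :=
  ∀ g : G, Isometry (fun y : Y => g • y)

/-- the action of `G` on `Y` is (metrically) proper. -/
def ProperAction (G Y : Type*) [Group G] [MulAction G Y] [MetricSpace Y] : Prop :=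
  ∀ B : Set Y, Bornology.IsBounded B → Set.Finite {g : G | (g • B) ∩ B ≠ ∅}

/-- `G` is non-elementary: no finite-index subgroup is trivial or infinite cyclic. -/
def NonElementary (G : Type*) [Group G] : Prop :=
  ∀ H : Subgroup G, H.index ≠ 0 → ∀ g : G, H ≠ Subgroup.zpowers g

/-- the orbit of `o` under the cyclic group generated by `f`. -/
def cyclicOrbit (o : Y) (f : G) : Set Y :=
  {y : Y | ∃ n : ℤ, y = f ^ n • o}

/-- `f` is a contracting element with `C`-contracting orbit: it has infinite order,
`n ↦ fⁿ • o` is a quasi-isometric embedding of `ℤ`, and `⟨f⟩ • o` is `C`-contracting. -/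
def IsContractingElt (o : Y) (C : ℝ) (f : G) : Prop :=
  (∀ n : ℤ, n ≠ 0 → f ^ n ≠ 1) ∧
  (∃ c : ℝ, 1 ≤ c ∧ ∀ m n : ℤ,
      (1 / c) * |(m : ℝ) - (n : ℝ)| - c ≤ dist (f ^ m • o) (f ^ n • o) ∧
      dist (f ^ m • o) (f ^ n • o) ≤ c * |(m : ℝ) - (n : ℝ)| + c) ∧
  IsContractingSet C (cyclicOrbit o f)

/-- `f` is a contracting element. -/
def IsContractingEltAny (o : Y) (f : G) : Prop :=
  ∃ C : ℝ, 1 ≤ C ∧ IsContractingElt o C f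

/-- the elementary group `E(f)`: elements moving `⟨f⟩ • o` a finite Hausdorff distance. -/
def EGroup (o : Y) (f : G) : Set G :=
  {g : G | EMetric.hausdorffEdist (g • cyclicOrbit o f) (cyclicOrbit o f) ≠ ⊤}

/-- the axis `Ax(f) = E(f) • o`. -/
def axisOf (o : Y) (f : G) : Set Y :=
  (fun g : G => g • o) '' EGroup o f

/-- the family of all `G`-translated axes of `h` and `k`. -/
def axesPairFam (o : Y) (h k : G) : Set (Set Y) :=
  {S | ∃ g : G, S = g • axisOf o h ∨ S = g • axisOf o k}

/-- `h` and `k` are independent contracting elements: the family of their translated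
axes has bounded projection. -/
def IndepElts (o : Y) (h k : G) : Prop :=
  ∃ B : ℝ, 0 < B ∧ ∀ U ∈ axesPairFam o h k, ∀ V ∈ axesPairFam o h k,
    U ≠ V → EMetric.diam (projSetOf U V) ≤ ENNReal.ofReal B

/-- the family of all `G`-translated axes of the triple `f₁, f₂, f₃`. -/
def axesTripleFam (o : Y) (f₁ f₂ f₃ : G) : Set (Set Y) :=
  {S | ∃ g : G, S = g • axisOf o f₁ ∨ S = g • axisOf o f₂ ∨ S = g • axisOf o f₃}

/-- `F = {f₁,f₂,f₃}` is an admissible triple with constants `C`, `B₀`: three pairwise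
independent contracting elements whose translated axes are `C`-contracting with
`B₀`-bounded projection. -/
def IsAdmissibleTriple (o : Y) (C B₀ : ℝ) (f₁ f₂ f₃ : G) : Prop :=
  f₁ ≠ f₂ ∧ f₁ ≠ f₃ ∧ f₂ ≠ f₃ ∧
  IsContractingEltAny o f₁ ∧ IsContractingEltAny o f₂ ∧ IsContractingEltAny o f₃ ∧
  IndepElts o f₁ f₂ ∧ IndepElts o f₁ f₃ ∧ IndepElts o f₂ f₃ ∧
  (∀ S ∈ axesTripleFam o f₁ f₂ f₃, IsContractingSet C S) ∧
  (∀ U ∈ axesTripleFam o f₁ f₂ f₃, ∀ V ∈ axesTripleFam o f₁ f₂ f₃,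
    U ≠ V → EMetric.diam (projSetOf U V) ≤ ENNReal.ofReal B₀)

/-- the geodesic `γ` contains an `(r,f)`-barrier at `g • o`. -/
def HasBarrier (o : Y) (r : ℝ) (f g : G) (γ : Set Y) : Prop :=
  Metric.infDist (g • o) γ ≤ r ∧ Metric.infDist ((g * f) • o) γ ≤ r

/-- the partial cone `Ω_x^F(g • o, r)`. -/
def partialCone (o x : Y) (f₁ f₂ f₃ : G) (g : G) (r : ℝ) : Set Y :=
  {z | ∃ γ : Set Y, IsGeodesicIn Y γ x z ∧
      (HasBarrier o r f₁ g γ ∨ HasBarrier o r f₂ g γ ∨ HasBarrier o r f₃ g γ)}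

/-- the partial shadow `Π_x^F(g • o, r)`: accumulation points of the partial cone in
the horofunction boundary. -/
def partialShadow (o x : Y) (f₁ f₂ f₃ : G) (g : G) (r : ℝ) : Set C(Y, ℝ) :=
  {ξ | IsHoroPoint o ξ ∧ ∃ u : ℕ → Y, (∀ n, u n ∈ partialCone o x f₁ f₂ f₃ g r) ∧
      HoroConv o u ξ}

/-- `ξ` is an `(r,F)`-conical point. -/
def IsConicalPt (o : Y) (f₁ f₂ f₃ : G) (r : ℝ) (ξ : C(Y, ℝ)) : Prop :=
  ∃ g₀ : G, Set.Infinite {g : G | ξ ∈ partialShadow o (g₀ • o) f₁ f₂ f₃ g r}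

/-- the usual cone `Ω_x(y,r)`. -/
def usualCone (x y : Y) (r : ℝ) : Set Y :=
  {z | ∃ γ : Set Y, IsGeodesicIn Y γ x z ∧ ∃ p ∈ γ, dist p y ≤ r}

/-- the usual shadow `Π_x(y,r)`. -/
def usualShadow (o x y : Y) (r : ℝ) : Set C(Y, ℝ) :=
  {ξ | IsHoroPoint o ξ ∧ ∃ u : ℕ → Y, (∀ n, u n ∈ usualCone x y r) ∧ HoroConv o u ξ}

/-- the set `Λ_c(G)` of conical points of the action. -/
def conicalSet (G : Type*) {Y : Type*} [Group G] [MulAction G Y] [MetricSpace Y]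
    (o : Y) : Set C(Y, ℝ) :=
  {ξ | ∃ r : ℝ, 0 < r ∧ ∃ g₀ : G, ∃ u : ℕ → G,
      Filter.Tendsto (fun n => dist o (u n • o)) atTop atTop ∧
      ∀ n, ξ ∈ usualShadow o (g₀ • o) (u n • o) r}

/-- the attracting fixed-point set `[h⁺]`: the locus of the accumulation points of
`{hⁿ o : n > 0}` in the horofunction boundary. -/
def attrFix (o : Y) (h : G) : Set C(Y, ℝ) :=
  locus o (accPoints o (fun n : ℕ => h ^ (n + 1) • o))

/-- the repelling fixed-point set `[h⁻]`. -/
def repFix (o : Y) (h : G) : Set C(Y, ℝ) :=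
  locus o (accPoints o (fun n : ℕ => h ^ (-(n + 1) : ℤ) • o))

/-- the limit set `Λ G y` of the orbit `G • y` in the horofunction boundary. -/
def orbitLimitSet (G : Type*) {Y : Type*} [Group G] [MulAction G Y] [MetricSpace Y]
    (o y : Y) : Set C(Y, ℝ) :=
  {ξ | IsHoroPoint o ξ ∧ ∃ u : ℕ → G,
      Filter.Tendsto (fun n => busemannCM o (u n • y)) atTop (nhds ξ)}

/-- the action of an isometry `g` on horofunctions. -/
def horoAct [ContinuousConstSMul G Y] (o : Y) (g : G) (ξ : C(Y, ℝ)) : C(Y, ℝ) :=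
  ⟨fun y => ξ (g⁻¹ • y) - ξ (g⁻¹ • o),
    (ξ.continuous.comp (continuous_const_smul g⁻¹)).sub continuous_const⟩

/-- the number of orbit points of `Γ ⊆ G` in the closed ball of radius `R` around `o`. -/
def orbitCount (G : Type*) {Y : Type*} [Group G] [MulAction G Y] [MetricSpace Y]
    (o : Y) (Γ : Set G) (R : ℝ) : ℕ :=
  Nat.card {g : G // g ∈ Γ ∧ dist o (g • o) ≤ R}

/-- the critical exponent `ω_Γ` of a subset `Γ ⊆ G`. -/
def critExp (G : Type*) {Y : Type*} [Group G] [MulAction G Y] [MetricSpace Y]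
    (o : Y) (Γ : Set G) : ℝ :=
  Filter.limsup (fun R : ℝ => Real.log (orbitCount G o Γ R) / R) atTop

/-- an `ω`-dimensional `G`-equivariant conformal density on the horofunction boundary:
a family of finite measures supported on `∂_h Y`, normalized at `o`, `G`-equivariant,
with conformal derivative `dμ_x/dμ_y(ξ) = e^{-ω·B_ξ(x,y)}`. -/
def IsConformalDensity (G : Type*) {Y : Type*} [Group G] [MulAction G Y] [MetricSpace Y]
    [ContinuousConstSMul G Y] [MeasurableSpace C(Y, ℝ)]
    (o : Y) (ω : ℝ) (μ : Y → MeasureTheory.Measure C(Y, ℝ)) : Prop :=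
  (∀ x : Y, MeasureTheory.IsFiniteMeasure (μ x)) ∧
  (∀ x : Y, μ x {ξ : C(Y, ℝ) | ¬ IsHoroPoint o ξ} = 0) ∧
  μ o Set.univ = 1 ∧
  (∀ g : G, ∀ x : Y, MeasureTheory.Measure.map (horoAct o g) (μ x) = μ (g • x)) ∧
  (∀ x y : Y, μ x = (μ y).withDensity
      (fun ξ : C(Y, ℝ) => ENNReal.ofReal (Real.exp (-ω * (ξ x - ξ y)))))

end GroupAction

/-! Far along the sequences, `x n` is a projection of `y n` that is far from the projections of
`z` and of `o`. Contraction then makes every geodesic from `y n` to `z` (or to `o`) pass within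
`2C` of `x n`, so `x n` lies on such geodesics up to an error `4C`. This pins
`b_{x n} - b_{y n}` within `4C` at `z`, and the bound passes to the limit. -/

section Contracting

variable {Y : Type*} [MetricSpace Y]

theorem IsGeodesicIn.dist_add_dist_eq {γ : Set Y} {a b p : Y} (hγ : IsGeodesicIn Y γ a b)
    (hp : p ∈ γ) : dist a p + dist p b = dist a b := by
  obtain ⟨f, hf0, hfL, hiso, rfl⟩ := hγ
  obtain ⟨t, ht, rfl⟩ := hp
  have hL : dist a b ∈ Icc 0 (dist a b) := right_mem_Icc.2 dist_nonneg
  have h0 : (0 : ℝ) ∈ Icc 0 (dist a b) := left_mem_Icc.2 dist_nonneg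
  have hleft : dist a (f t) = t := by
    have := hiso 0 h0 t ht
    rwa [hf0, zero_sub, abs_neg, abs_of_nonneg ht.1] at this
  have hright : dist (f t) b = dist a b - t := by
    have := hiso t ht _ hL
    rwa [hfL, abs_of_nonpos (sub_nonpos.2 ht.2), neg_sub] at this
  rw [hleft, hright]
  ring

theorem IsGeodesicIn.left_mem {γ : Set Y} {a b : Y} (hγ : IsGeodesicIn Y γ a b) : a ∈ γ := by
  obtain ⟨f, hf0, -, -, rfl⟩ := hγ
  exact ⟨0, left_mem_Icc.2 dist_nonneg, hf0⟩

theorem IsGeodesicIn.right_mem {γ : Set Y} {a b : Y} (hγ : IsGeodesicIn Y γ a b) : b ∈ γ := by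
  obtain ⟨f, -, hfL, -, rfl⟩ := hγ
  exact ⟨dist a b, right_mem_Icc.2 dist_nonneg, hfL⟩

theorem isGeodesicIn_image_Icc {f : ℝ → Y} {L t : ℝ}
    (hiso : ∀ s ∈ Icc (0 : ℝ) L, ∀ s' ∈ Icc (0 : ℝ) L, dist (f s) (f s') = |s - s'|)
    (ht : t ∈ Icc 0 L) : IsGeodesicIn Y (f '' Icc 0 t) (f 0) (f t) := by
  have hsub : Icc 0 t ⊆ Icc 0 L := Icc_subset_Icc_right ht.2
  have hdist : dist (f 0) (f t) = t := by
    rw [hiso 0 (hsub (left_mem_Icc.2 ht.1)) t ht, zero_sub, abs_neg, abs_of_nonneg ht.1]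
  refine ⟨f, rfl, by rw [hdist], ?_, by rw [hdist]⟩
  rw [hdist]
  exact fun s hs s' hs' => hiso s (hsub hs) s' (hsub hs')

theorem projSet_nonempty [ProperSpace Y] {X : Set Y} (hX : IsClosed X) (hne : X.Nonempty)
    (w : Y) : (projSet X w).Nonempty := by
  obtain ⟨q, hqX, hq⟩ := hX.exists_infDist_eq_dist hne w
  exact ⟨q, hqX, hq.symm⟩

theorem IsContractingSet.dist_le_of_mem_projSet {C : ℝ} {X γ : Set Y} {a b p q : Y}
    (hX : IsContractingSet C X) (hC : 0 ≤ C) (hγ : IsGeodesicIn Y γ a b)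
    (hfar : ∀ r ∈ γ, C ≤ infDist r X) (hp : p ∈ projSet X a) (hq : q ∈ projSet X b) :
    dist p q ≤ C := by
  have hpγ : p ∈ projSetOf X γ := mem_biUnion hγ.left_mem hp
  have hqγ : q ∈ projSetOf X γ := mem_biUnion hγ.right_mem hq
  rw [dist_edist]
  exact ENNReal.toReal_le_of_le_ofReal hC
    ((Metric.edist_le_ediam_of_mem hpγ hqγ).trans (hX a b γ hγ hfar))

theorem exists_first_le_of_continuousOn {g : ℝ → ℝ} {a b c : ℝ} (hg : ContinuousOn g (Icc a b))
    (ha : c ≤ g a) (hex : ∃ t ∈ Icc a b, g t ≤ c) :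
    ∃ t₀ ∈ Icc a b, g t₀ ≤ c ∧ ∀ t ∈ Icc a t₀, c ≤ g t := by
  set T := Icc a b ∩ g ⁻¹' Iic c
  have hTbdd : BddBelow T := ⟨a, fun t ht => ht.1.1⟩
  have ht₀ : sInf T ∈ T :=
    (hg.preimage_isClosed_of_isClosed isClosed_Icc isClosed_Iic).csInf_mem hex hTbdd
  refine ⟨sInf T, ht₀.1, ht₀.2, fun t ht => ?_⟩
  by_contra! hlt
  have htb : t ≤ b := ht.2.trans ht₀.1.2
  have hinf_le : sInf T ≤ t := csInf_le hTbdd ⟨⟨ht.1, htb⟩, hlt.le⟩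
  -- `g` crosses the level `c` on `[a, t]`, at a point of `T` that can only be `t` itself
  obtain ⟨s, hs, hgs⟩ := intermediate_value_Icc' ht.1 (hg.mono (Icc_subset_Icc_right htb))
    ⟨hlt.le, ha⟩
  have hinf_le_s : sInf T ≤ s := csInf_le hTbdd ⟨⟨hs.1, hs.2.trans htb⟩, hgs.le⟩
  have hst : s = t := le_antisymm hs.2 (ht.2.trans hinf_le_s)
  rw [hst] at hgs
  linarith

/-- The point is the first entry of the geodesic into the `C`-neighbourhood of `X`; if there is
none, contraction along the whole geodesic contradicts `hfar`. -/
theorem IsContractingSet.exists_mem_geodesic_dist_le [ProperSpace Y] {C : ℝ} {X γ : Set Y}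
    {w y x : Y} (hX : IsContractingSet C X) (hC : 0 ≤ C) (hXcl : IsClosed X)
    (hγ : IsGeodesicIn Y γ y w) (hx : x ∈ projSet X y)
    (hfar : ∀ w' ∈ projSet X w, C < dist x w') : ∃ p ∈ γ, dist x p ≤ 2 * C := by
  have hXne : X.Nonempty := ⟨x, hx.1⟩
  obtain ⟨w', hw'⟩ := projSet_nonempty hXcl hXne w
  have hγ' := hγ
  obtain ⟨f, hf0, -, hiso, rfl⟩ := hγ'
  set g : ℝ → ℝ := fun t => infDist (f t) X
  have hf : ContinuousOn f (Icc 0 (dist y w)) :=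
    (LipschitzOnWith.of_dist_le_mul (K := 1) fun s hs t ht => by
      simp [hiso s hs t ht, Real.dist_eq]).continuousOn
  have hg : ContinuousOn g (Icc 0 (dist y w)) := (continuous_infDist_pt X).comp_continuousOn hf
  have hnear : ∃ t ∈ Icc 0 (dist y w), g t ≤ C := by
    by_contra! h
    refine (hfar w' hw').not_ge (hX.dist_le_of_mem_projSet hC hγ ?_ hx hw')
    rintro r ⟨t, ht, rfl⟩
    exact (h t ht).le
  by_cases h0 : g 0 ≤ C
  · refine ⟨y, hγ.left_mem, ?_⟩
    rw [dist_comm, hx.2, ← hf0]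
    linarith
  obtain ⟨t₀, ht₀, hgt₀, hge⟩ := exists_first_le_of_continuousOn hg (not_le.1 h0).le hnear
  obtain ⟨q, hq⟩ := projSet_nonempty hXcl hXne (f t₀)
  have hxq : dist x q ≤ C := by
    refine hX.dist_le_of_mem_projSet hC (isGeodesicIn_image_Icc hiso ht₀) ?_ (hf0 ▸ hx) hq
    rintro r ⟨t, ht, rfl⟩
    exact hge t ht
  have hqf : dist q (f t₀) ≤ C := by
    rw [dist_comm, hq.2]
    exact hgt₀
  exact ⟨f t₀, ⟨t₀, ht₀, rfl⟩, by linarith [dist_triangle x q (f t₀)]⟩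

theorem IsContractingSet.dist_add_dist_le [ProperSpace Y] {C : ℝ} {X : Set Y} {w y x : Y}
    (hX : IsContractingSet C X) (hY : GeodesicSpace Y) (hC : 0 ≤ C) (hXcl : IsClosed X)
    (hx : x ∈ projSet X y) (hfar : ∀ w' ∈ projSet X w, C < dist x w') :
    dist w x + dist x y ≤ dist w y + 4 * C := by
  obtain ⟨γ, hγ⟩ := hY y w
  obtain ⟨p, hp, hxp⟩ := hX.exists_mem_geodesic_dist_le hC hXcl hγ hx hfar
  calc dist w x + dist x y ≤ (dist w p + dist p x) + (dist x p + dist p y) :=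
        add_le_add (dist_triangle _ _ _) (dist_triangle _ _ _)
    _ = (dist y p + dist p w) + 2 * dist x p := by
        rw [dist_comm w p, dist_comm p x, dist_comm p y]; ring
    _ ≤ dist w y + 4 * C := by
        rw [hγ.dist_add_dist_eq hp, dist_comm y w]; linarith

theorem eventually_lt_dist_of_mem_projSet {X : Set Y} {o : Y} {u : ℕ → Y}
    (hu : Tendsto (fun n => dist o (u n)) atTop atTop) (C : ℝ) (w : Y) :
    ∀ᶠ n in atTop, ∀ w' ∈ projSet X w, C < dist (u n) w' := by
  filter_upwards [hu.eventually_gt_atTop (C + dist o w + infDist w X)] with n hn w' hw'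
  linarith [dist_triangle o w w', dist_triangle o w' (u n), dist_comm w' (u n), hw'.2]

end Contracting

section Horofunction

variable {Y : Type*} [MetricSpace Y]

theorem continuous_busemannCM (o : Y) : Continuous (busemannCM o) :=
  ContinuousMap.continuous_of_continuous_uncurry _
    ((continuous_snd.dist continuous_fst).sub (continuous_const.dist continuous_fst))

theorem HoroConv.tendsto_apply {o : Y} {u : ℕ → Y} {ξ : C(Y, ℝ)} (h : HoroConv o u ξ) (z : Y) :
    Tendsto (fun n => busemannCM o (u n) z) atTop (𝓝 (ξ z)) :=
  ((continuous_eval_const z).tendsto ξ).comp h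

/-- In a proper space a bounded subsequence would subconverge to some `b_a`, which is not a
boundary point. -/
theorem IsHoroPoint.tendsto_dist_atTop [ProperSpace Y] {o : Y} {u : ℕ → Y} {ξ : C(Y, ℝ)}
    (hξ : IsHoroPoint o ξ) (h : HoroConv o u ξ) : Tendsto (fun n => dist o (u n)) atTop atTop := by
  by_contra hdiv
  rw [Filter.tendsto_atTop] at hdiv
  push Not at hdiv
  obtain ⟨R, hR⟩ := hdiv
  obtain ⟨φ, hφ, hφR⟩ := extraction_of_frequently_atTop hR
  obtain ⟨a, -, ψ, hψ, hψa⟩ := (isCompact_closedBall o R).tendsto_subseq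
    fun k => mem_closedBall'.2 (hφR k).le
  have hξa : Tendsto (fun k => busemannCM o (u (φ (ψ k)))) atTop (𝓝 ξ) :=
    h.comp (hφ.comp hψ).tendsto_atTop
  exact hξ.2 a (tendsto_nhds_unique hξa (((continuous_busemannCM o).tendsto a).comp hψa))

theorem abs_busemannCM_sub_le {o z x y : Y} {K : ℝ} (hz : dist z x + dist x y ≤ dist z y + K)
    (ho : dist o x + dist x y ≤ dist o y + K) : |busemannCM o x z - busemannCM o y z| ≤ K := by
  change |(dist z x - dist o x) - (dist z y - dist o y)| ≤ K
  rw [abs_le]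
  constructor <;> linarith [dist_triangle z x y, dist_triangle o x y]

end Horofunction

theorem statement0_general {Y : Type*} [MetricSpace Y] [ProperSpace Y]
    (hY : GeodesicSpace Y) (o : Y) (C : ℝ) (hC : 1 ≤ C)
    (X : Set Y) (hXcl : IsClosed X) (hXcon : IsContractingSet C X)
    (y : ℕ → Y) (η : C(Y, ℝ)) (hyconv : HoroConv o y η)
    (x : ℕ → Y) (hxproj : ∀ n, x n ∈ projSet X (y n))
    (ξ : C(Y, ℝ)) (hξ : IsHoroPoint o ξ) (hxconv : HoroConv o x ξ) :
    ∀ z : Y, |ξ z - η z| ≤ 4 * C := by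
  intro z
  have hC0 : 0 ≤ C := zero_le_one.trans hC
  have hesc := hξ.tendsto_dist_atTop hxconv
  have hbound : ∀ᶠ n in atTop, |busemannCM o (x n) z - busemannCM o (y n) z| ≤ 4 * C := by
    filter_upwards [eventually_lt_dist_of_mem_projSet hesc C z,
      eventually_lt_dist_of_mem_projSet hesc C o] with n hz ho
    exact abs_busemannCM_sub_le (hXcon.dist_add_dist_le hY hC0 hXcl (hxproj n) hz)
      (hXcon.dist_add_dist_le hY hC0 hXcl (hxproj n) ho)
  exact le_of_tendsto (((hxconv.tendsto_apply z).sub (hyconv.tendsto_apply z)).abs) hbound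

/-- if `X` is a `C`-contracting closed subset, `y n → η ∈ ∂_h Y`, and
`x n ∈ π_X(y n)` converge to `ξ ∈ ∂_h Y`, then `‖b_ξ - b_η‖_∞ ≤ 4C`. -/
theorem statement0 {Y : Type*} [MetricSpace Y] [ProperSpace Y]
    (hY : GeodesicSpace Y) (o : Y) (C : ℝ) (hC : 1 ≤ C)
    (X : Set Y) (hXcl : IsClosed X) (hXcon : IsContractingSet C X)
    (y : ℕ → Y) (η : C(Y, ℝ)) (hη : IsHoroPoint o η) (hyconv : HoroConv o y η)
    (x : ℕ → Y) (hxproj : ∀ n, x n ∈ projSet X (y n))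
    (ξ : C(Y, ℝ)) (hξ : IsHoroPoint o ξ) (hxconv : HoroConv o x ξ) :
    ∀ z : Y, |ξ z - η z| ≤ 4 * C :=
  statement0_general hY o C hC X hXcl hXcon y η hyconv x hxproj ξ hξ hxconv

end ConfDyn
end
end

section
/- Let γ be a C-contracting geodesic ray in Y (an isometric embedding of [0,∞) whose image is C-contracting). Then all accumulation points of γ in ∂_hY lie in a single finite-difference class, and any two points ξ, η of the locus [γ] of this set of accumulation points satisfy ‖b_ξ − b_η‖_∞ ≤ 4C. -/
open Metric Filter Topology Set MeasureTheory Pointwise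

noncomputable section

namespace ConfDyn

section Statement1Aux

variable {Y : Type*} [MetricSpace Y] [ProperSpace Y]

/-- The Busemann-type function of the ray: `rayh f x = lim_{t→∞} (d(x, f t) - t)`. -/
def rayh (f : ℝ → Y) (x : Y) : ℝ := ⨅ t : ℝ, (dist x (f (max t 0)) - max t 0)

/-- The asymptotic value `L = lim (η(f t) + t)` of a horofunction along the ray. -/
def rayL (f : ℝ → Y) (η : C(Y, ℝ)) : ℝ := ⨆ t : ℝ, (η (f (max t 0)) + max t 0)

lemma horo_eval_basept (o : Y) {η : C(Y, ℝ)} (hη : η ∈ horoCpt Y o) : η o = 0 := by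
  have hcl : IsClosed {g : C(Y, ℝ) | g o = 0} :=
    isClosed_eq (ContinuousEvalConst.continuous_eval_const o) continuous_const
  have hsub : Set.range (busemannCM o) ⊆ {g : C(Y, ℝ) | g o = 0} := by
    rintro g ⟨y, rfl⟩
    simp [busemannCM]
  exact (closure_minimal hsub hcl) hη

lemma horo_lip (o : Y) {η : C(Y, ℝ)} (hη : η ∈ horoCpt Y o) (x x' : Y) :
    η x - η x' ≤ dist x x' := by
  have hcl : IsClosed {g : C(Y, ℝ) | g x - g x' ≤ dist x x'} :=
    isClosed_le ((ContinuousEvalConst.continuous_eval_const x).sub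
      (ContinuousEvalConst.continuous_eval_const x')) continuous_const
  have hsub : Set.range (busemannCM o) ⊆ {g : C(Y, ℝ) | g x - g x' ≤ dist x x'} := by
    rintro g ⟨y, rfl⟩
    simp only [busemannCM, ContinuousMap.coe_mk, Set.mem_setOf_eq]
    have := dist_triangle x x' y
    linarith
  exact (closure_minimal hsub hcl) hη

lemma horo_approx (o : Y) {η : C(Y, ℝ)} (hη : η ∈ horoCpt Y o) (p₁ p₂ p₃ : Y)
    {ε : ℝ} (hε : 0 < ε) :
    ∃ y : Y, |dist p₁ y - dist o y - η p₁| ≤ ε ∧ |dist p₂ y - dist o y - η p₂| ≤ ε ∧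
      |dist p₃ y - dist o y - η p₃| ≤ ε := by
  set Φ : C(Y, ℝ) → ℝ × ℝ × ℝ := fun g => (g p₁, g p₂, g p₃) with hΦ
  have hcont : Continuous Φ := by
    refine Continuous.prodMk ?_ (Continuous.prodMk ?_ ?_) <;>
      exact ContinuousEvalConst.continuous_eval_const _
  have h1 : Φ η ∈ closure (Φ '' Set.range (busemannCM o)) :=
    image_closure_subset_closure_image hcont ⟨η, hη, rfl⟩
  rw [Metric.mem_closure_iff] at h1
  obtain ⟨q, ⟨g, ⟨y, rfl⟩, rfl⟩, hq⟩ := h1 ε hε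
  have hb : ∀ p : Y, busemannCM o y p = dist p y - dist o y := fun p => rfl
  have key : ∀ p : Y, dist (Φ η) (Φ (busemannCM o y)) ≤ ε →
      True := fun _ _ => trivial
  have h₁ : dist (η p₁) (busemannCM o y p₁) ≤ ε := by
    calc dist (η p₁) (busemannCM o y p₁) = dist (Φ η).1 (Φ (busemannCM o y)).1 := rfl
    _ ≤ dist (Φ η) (Φ (busemannCM o y)) := by
        rw [Prod.dist_eq]; exact le_max_left _ _
    _ ≤ ε := le_of_lt hq
  have h₂ : dist (η p₂) (busemannCM o y p₂) ≤ ε := by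
    calc dist (η p₂) (busemannCM o y p₂) = dist (Φ η).2.1 (Φ (busemannCM o y)).2.1 := rfl
    _ ≤ dist (Φ η).2 (Φ (busemannCM o y)).2 := by
        rw [Prod.dist_eq]; exact le_max_left _ _
    _ ≤ dist (Φ η) (Φ (busemannCM o y)) := by
        rw [Prod.dist_eq]; exact le_max_right _ _
    _ ≤ ε := le_of_lt hq
  have h₃ : dist (η p₃) (busemannCM o y p₃) ≤ ε := by
    calc dist (η p₃) (busemannCM o y p₃) = dist (Φ η).2.2 (Φ (busemannCM o y)).2.2 := rfl
    _ ≤ dist (Φ η).2 (Φ (busemannCM o y)).2 := by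
        rw [Prod.dist_eq]; exact le_max_right _ _
    _ ≤ dist (Φ η) (Φ (busemannCM o y)) := by
        rw [Prod.dist_eq]; exact le_max_right _ _
    _ ≤ ε := le_of_lt hq
  rw [Real.dist_eq] at h₁ h₂ h₃
  rw [hb] at h₁ h₂ h₃
  exact ⟨y, by rw [abs_sub_comm] at h₁; exact h₁, by rw [abs_sub_comm] at h₂; exact h₂,
    by rw [abs_sub_comm] at h₃; exact h₃⟩

set_option linter.unusedSectionVars false

lemma rayh_bddBelow (f : ℝ → Y)
    (hray : ∀ s t : ℝ, 0 ≤ s → 0 ≤ t → dist (f s) (f t) = |s - t|) (x : Y) :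
    BddBelow (Set.range fun t : ℝ => dist x (f (max t 0)) - max t 0) := by
  refine ⟨-dist x (f 0), ?_⟩
  rintro _ ⟨t, rfl⟩
  have h1 : dist (f 0) (f (max t 0)) = max t 0 := by
    rw [hray 0 (max t 0) le_rfl (le_max_right t 0), zero_sub, abs_neg,
      abs_of_nonneg (le_max_right t 0)]
  have h2 := dist_triangle (f 0) x (f (max t 0))
  have h3 : dist (f 0) x = dist x (f 0) := dist_comm _ _
  simp only [Set.mem_setOf_eq]
  linarith

lemma rayh_antitone (f : ℝ → Y)
    (hray : ∀ s t : ℝ, 0 ≤ s → 0 ≤ t → dist (f s) (f t) = |s - t|) (x : Y) :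
    Antitone (fun t : ℝ => dist x (f (max t 0)) - max t 0) := by
  intro t t' htt'
  have hm : max t 0 ≤ max t' 0 := max_le_max htt' le_rfl
  have h1 : dist (f (max t 0)) (f (max t' 0)) = max t' 0 - max t 0 := by
    rw [hray (max t 0) (max t' 0) (le_max_right _ _) (le_max_right _ _),
      abs_of_nonpos (by linarith)]
    ring
  have h2 := dist_triangle x (f (max t 0)) (f (max t' 0))
  simp only
  linarith

lemma rayh_le (f : ℝ → Y)
    (hray : ∀ s t : ℝ, 0 ≤ s → 0 ≤ t → dist (f s) (f t) = |s - t|) (x : Y)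
    {τ : ℝ} (hτ : 0 ≤ τ) : rayh f x ≤ dist x (f τ) - τ := by
  have := ciInf_le (rayh_bddBelow f hray x) τ
  rwa [max_eq_left hτ] at this

lemma rayh_tendsto (f : ℝ → Y)
    (hray : ∀ s t : ℝ, 0 ≤ s → 0 ≤ t → dist (f s) (f t) = |s - t|) (x : Y) :
    Filter.Tendsto (fun t : ℝ => dist x (f (max t 0)) - max t 0) atTop (𝓝 (rayh f x)) :=
  tendsto_atTop_ciInf (rayh_antitone f hray x) (rayh_bddBelow f hray x)

lemma rayh_ray (f : ℝ → Y)
    (hray : ∀ s t : ℝ, 0 ≤ s → 0 ≤ t → dist (f s) (f t) = |s - t|)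
    {τ : ℝ} (hτ : 0 ≤ τ) : rayh f (f τ) = -τ := by
  refine le_antisymm ?_ (le_ciInf fun t => ?_)
  · have := rayh_le f hray (f τ) hτ
    simpa using this
  · have h1 : dist (f τ) (f (max t 0)) = |τ - max t 0| :=
      hray τ (max t 0) hτ (le_max_right _ _)
    have h2 : max t 0 - τ ≤ |τ - max t 0| := by
      rw [abs_sub_comm]; exact le_abs_self _
    rw [h1]
    linarith

lemma ray_isClosed (f : ℝ → Y)
    (hray : ∀ s t : ℝ, 0 ≤ s → 0 ≤ t → dist (f s) (f t) = |s - t|) :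
    IsClosed (f '' Set.Ici (0 : ℝ)) := by
  haveI : CompleteSpace (Set.Ici (0 : ℝ)) := isClosed_Ici.completeSpace_coe
  have hiso : Isometry (fun t : Set.Ici (0 : ℝ) => f t) := by
    refine Isometry.of_dist_eq ?_
    rintro ⟨s, hs⟩ ⟨t, ht⟩
    rw [hray s t hs ht, Subtype.dist_eq, Real.dist_eq]
  have := hiso.isClosedEmbedding.isClosed_range
  rwa [Set.image_eq_range] at *

lemma exists_proj (f : ℝ → Y)
    (hray : ∀ s t : ℝ, 0 ≤ s → 0 ≤ t → dist (f s) (f t) = |s - t|) (y : Y) :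
    ∃ s : ℝ, 0 ≤ s ∧ f s ∈ projSet (f '' Set.Ici 0) y ∧
      dist y (f s) = Metric.infDist y (f '' Set.Ici 0) := by
  obtain ⟨x, hx, hdx⟩ := (ray_isClosed f hray).exists_infDist_eq_dist
    ⟨f 0, 0, Set.self_mem_Ici, rfl⟩ y
  obtain ⟨s, hs, rfl⟩ := hx
  exact ⟨s, hs, ⟨⟨s, hs, rfl⟩, hdx.symm⟩, hdx.symm⟩

lemma subseg_geodesic {g : ℝ → Y} {D : ℝ}
    (hg : ∀ s ∈ Set.Icc (0:ℝ) D, ∀ t ∈ Set.Icc (0:ℝ) D, dist (g s) (g t) = |s - t|)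
    {r1 r2 : ℝ} (h1 : r1 ∈ Set.Icc (0:ℝ) D) (h2 : r2 ∈ Set.Icc (0:ℝ) D) (h12 : r1 ≤ r2) :
    IsGeodesicIn Y ((fun r => g (r1 + r)) '' Set.Icc 0 (r2 - r1)) (g r1) (g r2) := by
  have hd : dist (g r1) (g r2) = r2 - r1 := by
    rw [hg r1 h1 r2 h2, abs_of_nonpos (by linarith)]
    ring
  refine ⟨fun r => g (r1 + r), by simp, ?_, ?_, ?_⟩
  · show g (r1 + dist (g r1) (g r2)) = g r2
    rw [hd, show r1 + (r2 - r1) = r2 by ring]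
  · intro s hs t ht
    rw [hd] at hs ht
    have hmem : ∀ r ∈ Set.Icc (0:ℝ) (r2 - r1), r1 + r ∈ Set.Icc (0:ℝ) D := by
      intro r hr
      constructor <;> [linarith [h1.1, hr.1]; linarith [h2.2, hr.2]]
    have := hg (r1 + s) (hmem s hs) (r1 + t) (hmem t ht)
    simpa using this
  · rw [hd]

lemma contr_pair {C : ℝ} (hC0 : 0 ≤ C) {X : Set Y} (hcontr : IsContractingSet C X)
    {p q : Y} {γ : Set Y} (hγ : IsGeodesicIn Y γ p q)
    (hfar : ∀ w ∈ γ, C ≤ Metric.infDist w X)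
    {x₁ x₂ : Y} (h1 : x₁ ∈ projSet X p) (h2 : x₂ ∈ projSet X q) :
    dist x₁ x₂ ≤ C := by
  have hd := hcontr p q γ hγ hfar
  obtain ⟨g, hg0, hgD, hgiso, hγeq⟩ := hγ
  have hp : p ∈ γ := by rw [hγeq]; exact ⟨0, ⟨le_rfl, dist_nonneg⟩, hg0⟩
  have hq : q ∈ γ := by rw [hγeq]; exact ⟨dist p q, ⟨dist_nonneg, le_rfl⟩, hgD⟩
  have m1 : x₁ ∈ projSetOf X γ := Set.mem_biUnion hp h1
  have m2 : x₂ ∈ projSetOf X γ := Set.mem_biUnion hq h2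
  have hle := (EMetric.edist_le_diam_of_mem m1 m2).trans hd
  rw [edist_dist] at hle
  exact (ENNReal.ofReal_le_ofReal_iff hC0).mp hle

lemma infDist_geod_cont {g : ℝ → Y} {D : ℝ} (hD0 : 0 ≤ D)
    (hg : ∀ s ∈ Set.Icc (0:ℝ) D, ∀ t ∈ Set.Icc (0:ℝ) D, dist (g s) (g t) = |s - t|)
    (X : Set Y) :
    ∃ h' : ℝ → ℝ, Continuous h' ∧ ∀ r ∈ Set.Icc (0:ℝ) D, h' r = Metric.infDist (g r) X := by
  have hlip : LipschitzOnWith 1 g (Set.Icc (0:ℝ) D) := by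
    refine LipschitzOnWith.of_dist_le_mul fun a ha b hb => ?_
    rw [hg a ha b hb, Real.dist_eq]
    simp
  have hclamp_mem : ∀ r : ℝ, max 0 (min r D) ∈ Set.Icc (0:ℝ) D := fun r =>
    ⟨le_max_left _ _, max_le hD0 (min_le_right _ _)⟩
  have hcont : Continuous fun r : ℝ => g (max 0 (min r D)) :=
    hlip.continuousOn.comp_continuous
      (continuous_const.max (continuous_id.min continuous_const)) hclamp_mem
  refine ⟨fun r => Metric.infDist (g (max 0 (min r D))) X,
    (continuous_infDist_pt X).comp hcont, fun r hr => ?_⟩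
  show Metric.infDist (g (max 0 (min r D))) X = Metric.infDist (g r) X
  rw [min_eq_left hr.2, max_eq_right hr.1]

lemma dist_ray_lower (hY : GeodesicSpace Y) {C : ℝ} (hC : 1 ≤ C) {f : ℝ → Y}
    (hray : ∀ s t : ℝ, 0 ≤ s → 0 ≤ t → dist (f s) (f t) = |s - t|)
    (hcontr : IsContractingSet C (f '' Set.Ici (0:ℝ)))
    {y : Y} {s τ' : ℝ} (hs0 : 0 ≤ s)
    (hproj : f s ∈ projSet (f '' Set.Ici (0:ℝ)) y) (hsτ : s + C ≤ τ') :
    Metric.infDist y (f '' Set.Ici (0:ℝ)) + (τ' - s) - 3*C ≤ dist y (f τ') := by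
  set X := f '' Set.Ici (0:ℝ) with hXdef
  have hC0 : (0:ℝ) < C := lt_of_lt_of_le one_pos hC
  have hτ'0 : 0 ≤ τ' := by linarith
  have hdy : dist y (f s) = Metric.infDist y X := hproj.2
  obtain ⟨γ, g, hg0, hgD, hgiso, hγeq⟩ := hY y (f τ')
  set D := dist y (f τ') with hDdef
  have hD0 : 0 ≤ D := dist_nonneg
  obtain ⟨h', hh'c, hh'eq⟩ := infDist_geod_cont hD0 hgiso X
  set A := Set.Icc (0:ℝ) D ∩ {r : ℝ | h' r ≤ C} with hAdef
  have hAclosed : IsClosed A := isClosed_Icc.inter (isClosed_le hh'c continuous_const)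
  have hAcompact : IsCompact A :=
    IsCompact.of_isClosed_subset isCompact_Icc hAclosed Set.inter_subset_left
  have hDA : D ∈ A := by
    refine ⟨⟨hD0, le_rfl⟩, ?_⟩
    have : h' D = Metric.infDist (g D) X := hh'eq D ⟨hD0, le_rfl⟩
    rw [Set.mem_setOf_eq, this, hgD,
      Metric.infDist_zero_of_mem (show f τ' ∈ X from ⟨τ', hτ'0, rfl⟩)]
    linarith
  obtain ⟨u, huA, hulb⟩ := hAcompact.exists_isLeast ⟨D, hDA⟩
  have huIcc : u ∈ Set.Icc (0:ℝ) D := huA.1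
  have huC : Metric.infDist (g u) X ≤ C := by rw [← hh'eq u huIcc]; exact huA.2
  rcases eq_or_lt_of_le huIcc.1 with h0u | h0u
  · -- u = 0 : y is already C-close to the ray
    have hyX : Metric.infDist y X ≤ C := by
      rw [← hg0]
      rw [← h0u] at huC
      exact huC
    have h1 : dist (f s) (f τ') = τ' - s := by
      rw [hray s τ' hs0 hτ'0, abs_of_nonpos (by linarith)]; ring
    have h2 := dist_triangle (f s) y (f τ')
    have h3 : dist (f s) y = dist y (f s) := dist_comm _ _
    linarith
  · -- 0 < u : use the contracting property on the initial segment
    have hfar : ∀ w ∈ (fun r => g (0 + r)) '' Set.Icc 0 (u - 0),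
        C ≤ Metric.infDist w X := by
      rintro w ⟨r, hr, rfl⟩
      simp only [zero_add]
      rw [sub_zero] at hr
      have hrIcc : r ∈ Set.Icc (0:ℝ) D := ⟨hr.1, le_trans hr.2 huIcc.2⟩
      rcases eq_or_lt_of_le hr.2 with hru | hru
      · -- r = u : left limit
        subst hru
        have hclosure : r ∈ closure (Set.Ioo (0:ℝ) r) := by
          rw [closure_Ioo (ne_of_lt h0u)]
          exact ⟨le_of_lt h0u, le_rfl⟩
        haveI hne : (𝓝[Set.Ioo (0:ℝ) r] r).NeBot :=
          mem_closure_iff_nhdsWithin_neBot.mp hclosure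
        have htend : Filter.Tendsto h' (𝓝[Set.Ioo (0:ℝ) r] r) (𝓝 (h' r)) :=
          (hh'c.tendsto r).mono_left nhdsWithin_le_nhds
        have hge : C ≤ h' r := by
          refine ge_of_tendsto htend (eventually_mem_nhdsWithin.mono fun ρ hρ => ?_)
          have hρIcc : ρ ∈ Set.Icc (0:ℝ) D :=
            ⟨le_of_lt hρ.1, le_trans (le_of_lt hρ.2) hrIcc.2⟩
          by_contra hcon
          push_neg at hcon
          exact absurd (hulb ⟨hρIcc, le_of_lt hcon⟩) (not_le.mpr hρ.2)
        rwa [hh'eq r hrIcc] at hge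
      · -- r < u : r is not in A
        have : ¬ (h' r ≤ C) := fun hcon =>
          absurd (hulb ⟨hrIcc, hcon⟩) (not_le.mpr hru)
        rw [hh'eq r hrIcc] at this
        linarith [not_le.mp this]
    have hgeo' := subseg_geodesic hgiso ⟨le_rfl, hD0⟩ huIcc huIcc.1
    rw [hg0] at hgeo'
    obtain ⟨σu, hσu0, hσuproj, hσudist⟩ := exists_proj f hray (g u)
    have hclose : dist (f s) (f σu) ≤ C :=
      contr_pair (le_of_lt hC0) hcontr hgeo' hfar hproj hσuproj
    have hσus : |s - σu| ≤ C := by rw [← hray s σu hs0 hσu0]; exact hclose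
    have habs := abs_le.mp hσus
    have hguσ : dist (g u) (f σu) ≤ C := by rw [hσudist]; exact huC
    have e1 : dist y (g u) = u := by
      rw [← hg0, hgiso 0 ⟨le_rfl, hD0⟩ u huIcc, zero_sub, abs_neg, abs_of_nonneg huIcc.1]
    have e2 : dist (g u) (f τ') = D - u := by
      rw [← hgD, hgiso u huIcc D ⟨hD0, le_rfl⟩, abs_of_nonpos (by linarith [huIcc.2])]
      ring
    have e3 : dist (f σu) (f τ') = τ' - σu := by
      rw [hray σu τ' hσu0 hτ'0, abs_of_nonpos (by linarith)]; ring
    have t1 : Metric.infDist y X ≤ dist y (f σu) :=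
      Metric.infDist_le_dist_of_mem ⟨σu, hσu0, rfl⟩
    have t2 := dist_triangle y (g u) (f σu)
    have t3 := dist_triangle (f σu) (g u) (f τ')
    have t4 : dist (f σu) (g u) = dist (g u) (f σu) := dist_comm _ _
    linarith

lemma geod_exists_near (hY : GeodesicSpace Y) {C : ℝ} (hC : 1 ≤ C) {f : ℝ → Y}
    (hray : ∀ s t : ℝ, 0 ≤ s → 0 ≤ t → dist (f s) (f t) = |s - t|)
    (hcontr : IsContractingSet C (f '' Set.Ici (0:ℝ)))
    {z y : Y} {a s τ : ℝ} (ha0 : 0 ≤ a) (hza : f a ∈ projSet (f '' Set.Ici (0:ℝ)) z)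
    (hs0 : 0 ≤ s) (hys : f s ∈ projSet (f '' Set.Ici (0:ℝ)) y)
    (hτ0 : 0 ≤ τ) (has : a + C < s) (hτs : τ + C ≤ s) :
    ∃ σ : ℝ, τ ≤ σ ∧ 0 ≤ σ ∧ dist z (f σ) + dist (f σ) y - 2*C ≤ dist z y := by
  set X := f '' Set.Ici (0:ℝ) with hXdef
  have hC0 : (0:ℝ) < C := lt_of_lt_of_le one_pos hC
  obtain ⟨γ, hγ⟩ := hY z y
  obtain ⟨g, hg0, hgD, hgiso, hγeq⟩ := id hγ
  set D := dist z y with hDdef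
  have hD0 : 0 ≤ D := dist_nonneg
  obtain ⟨h', hh'c, hh'eq⟩ := infDist_geod_cont hD0 hgiso X
  set A := Set.Icc (0:ℝ) D ∩ {r : ℝ | h' r ≤ C} with hAdef
  have hAclosed : IsClosed A := isClosed_Icc.inter (isClosed_le hh'c continuous_const)
  have hAcompact : IsCompact A :=
    IsCompact.of_isClosed_subset isCompact_Icc hAclosed Set.inter_subset_left
  by_cases hAne : A.Nonempty
  · obtain ⟨v, hvA, hub⟩ := hAcompact.exists_isGreatest hAne
    have hvIcc : v ∈ Set.Icc (0:ℝ) D := hvA.1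
    have hvC : Metric.infDist (g v) X ≤ C := by rw [← hh'eq v hvIcc]; exact hvA.2
    rcases eq_or_lt_of_le hvIcc.2 with hvD | hvD
    · -- v = D : y is C-close to the ray
      have hyC : dist y (f s) ≤ C := by
        rw [hys.2]
        have : Metric.infDist y X ≤ C := by
          rw [← hgD]
          rw [hvD] at hvC
          exact hvC
        exact this
      have t1 := dist_triangle z y (f s)
      have t2 : dist y (f s) = dist (f s) y := dist_comm _ _
      exact ⟨s, by linarith, hs0, by linarith⟩
    · -- v < D : contracting on the terminal segment
      have hfar : ∀ w ∈ (fun r => g (v + r)) '' Set.Icc 0 (D - v),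
          C ≤ Metric.infDist w X := by
        rintro w ⟨r, hr, rfl⟩
        show C ≤ Metric.infDist (g (v + r)) X
        have hρIcc : v + r ∈ Set.Icc (0:ℝ) D :=
          ⟨by linarith [hvIcc.1, hr.1], by linarith [hr.2]⟩
        rcases eq_or_lt_of_le hr.1 with hr0 | hr0
        · -- v + r = v : right limit
          have hvr : v + r = v := by rw [← hr0]; ring
          rw [hvr]
          have hclosure : v ∈ closure (Set.Ioo v D) := by
            rw [closure_Ioo (ne_of_lt hvD)]
            exact ⟨le_rfl, le_of_lt hvD⟩
          haveI hne : (𝓝[Set.Ioo v D] v).NeBot :=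
            mem_closure_iff_nhdsWithin_neBot.mp hclosure
          have htend : Filter.Tendsto h' (𝓝[Set.Ioo v D] v) (𝓝 (h' v)) :=
            (hh'c.tendsto v).mono_left nhdsWithin_le_nhds
          have hge : C ≤ h' v := by
            refine ge_of_tendsto htend (eventually_mem_nhdsWithin.mono fun ρ hρ => ?_)
            have hρIcc' : ρ ∈ Set.Icc (0:ℝ) D :=
              ⟨le_trans hvIcc.1 (le_of_lt hρ.1), le_of_lt hρ.2⟩
            by_contra hcon
            push_neg at hcon
            exact absurd (hub ⟨hρIcc', le_of_lt hcon⟩) (not_le.mpr hρ.1)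
          rwa [hh'eq v hvIcc] at hge
        · -- v < v + r
          have : ¬ (h' (v + r) ≤ C) := fun hcon =>
            absurd (hub ⟨hρIcc, hcon⟩) (not_le.mpr (by linarith))
          rw [hh'eq _ hρIcc] at this
          linarith [not_le.mp this]
      have hgeo' := subseg_geodesic hgiso hvIcc ⟨hD0, le_rfl⟩ hvIcc.2
      rw [hgD] at hgeo'
      obtain ⟨σv, hσv0, hσvproj, hσvdist⟩ := exists_proj f hray (g v)
      have hclose : dist (f σv) (f s) ≤ C :=
        contr_pair (le_of_lt hC0) hcontr hgeo' hfar hσvproj hys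
      have hσvs : |σv - s| ≤ C := by rw [← hray σv s hσv0 hs0]; exact hclose
      have habs := abs_le.mp hσvs
      have hgvσ : dist (g v) (f σv) ≤ C := by rw [hσvdist]; exact hvC
      have e1 : dist z (g v) = v := by
        rw [← hg0, hgiso 0 ⟨le_rfl, hD0⟩ v hvIcc, zero_sub, abs_neg, abs_of_nonneg hvIcc.1]
      have e2 : dist (g v) y = D - v := by
        rw [← hgD, hgiso v hvIcc D ⟨hD0, le_rfl⟩, abs_of_nonpos (by linarith [hvIcc.2])]
        ring
      have t1 := dist_triangle z (g v) (f σv)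
      have t2 := dist_triangle (f σv) (g v) y
      have t3 : dist (f σv) (g v) = dist (g v) (f σv) := dist_comm _ _
      exact ⟨σv, by linarith, hσv0, by linarith⟩
  · -- A empty : whole geodesic is C-far from the ray, contradiction
    exfalso
    have hfar : ∀ w ∈ γ, C ≤ Metric.infDist w X := by
      rw [hγeq]
      rintro w ⟨r, hr, rfl⟩
      have : ¬ (h' r ≤ C) := fun hcon => hAne ⟨r, hr, hcon⟩
      rw [hh'eq r hr] at this
      linarith [not_le.mp this]
    have hclose : dist (f a) (f s) ≤ C :=
      contr_pair (le_of_lt hC0) hcontr hγ hfar hza hys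
    rw [hray a s ha0 hs0] at hclose
    have := abs_le.mp hclose
    linarith [this.1]

lemma rayL_mono (o : Y) {f : ℝ → Y}
    (hray : ∀ s t : ℝ, 0 ≤ s → 0 ≤ t → dist (f s) (f t) = |s - t|)
    {η : C(Y, ℝ)} (hη : η ∈ horoCpt Y o) :
    Monotone (fun t : ℝ => η (f (max t 0)) + max t 0) := by
  intro t t' htt'
  have hm : max t 0 ≤ max t' 0 := max_le_max htt' le_rfl
  have hlip := horo_lip o hη (f (max t 0)) (f (max t' 0))
  rw [hray (max t 0) (max t' 0) (le_max_right _ _) (le_max_right _ _),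
    abs_of_nonpos (by linarith)] at hlip
  simp only
  linarith

lemma rayL_bddAbove (o : Y) {f : ℝ → Y}
    (hray : ∀ s t : ℝ, 0 ≤ s → 0 ≤ t → dist (f s) (f t) = |s - t|)
    {η : C(Y, ℝ)} {K : ℝ} (hK : ∀ x, |η x - (rayh f x - rayh f o)| ≤ K) :
    BddAbove (Set.range fun t : ℝ => η (f (max t 0)) + max t 0) := by
  refine ⟨K - rayh f o, ?_⟩
  rintro _ ⟨t, rfl⟩
  have h1 := (abs_le.mp (hK (f (max t 0)))).2
  rw [rayh_ray f hray (le_max_right t 0)] at h1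
  simp only [Set.mem_setOf_eq]
  linarith

lemma le_rayL (o : Y) {f : ℝ → Y}
    (hray : ∀ s t : ℝ, 0 ≤ s → 0 ≤ t → dist (f s) (f t) = |s - t|)
    {η : C(Y, ℝ)} {K : ℝ} (hK : ∀ x, |η x - (rayh f x - rayh f o)| ≤ K)
    {τ : ℝ} (hτ : 0 ≤ τ) : η (f τ) + τ ≤ rayL f η := by
  have := le_ciSup (rayL_bddAbove o hray hK) τ
  rwa [max_eq_left hτ] at this

lemma rayL_tendsto (o : Y) {f : ℝ → Y}
    (hray : ∀ s t : ℝ, 0 ≤ s → 0 ≤ t → dist (f s) (f t) = |s - t|)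
    {η : C(Y, ℝ)} (hη : η ∈ horoCpt Y o)
    {K : ℝ} (hK : ∀ x, |η x - (rayh f x - rayh f o)| ≤ K) :
    Filter.Tendsto (fun t : ℝ => η (f (max t 0)) + max t 0) atTop (𝓝 (rayL f η)) :=
  tendsto_atTop_ciSup (rayL_mono o hray hη) (rayL_bddAbove o hray hK)

lemma horo_upper (o : Y) {f : ℝ → Y}
    (hray : ∀ s t : ℝ, 0 ≤ s → 0 ≤ t → dist (f s) (f t) = |s - t|)
    {η : C(Y, ℝ)} (hη : η ∈ horoCpt Y o)
    {K : ℝ} (hK : ∀ x, |η x - (rayh f x - rayh f o)| ≤ K) (z : Y) :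
    η z ≤ rayh f z + rayL f η := by
  have h1 : ∀ t : ℝ,
      η z ≤ (dist z (f (max t 0)) - max t 0) + (η (f (max t 0)) + max t 0) := by
    intro t
    have := horo_lip o hη z (f (max t 0))
    linarith
  have h2 : Filter.Tendsto
      (fun t : ℝ => (dist z (f (max t 0)) - max t 0) + (η (f (max t 0)) + max t 0))
      atTop (𝓝 (rayh f z + rayL f η)) :=
    (rayh_tendsto f hray z).add (rayL_tendsto o hray hη hK)
  exact ge_of_tendsto h2 (Filter.Eventually.of_forall h1)

lemma horo_lower (hY : GeodesicSpace Y) (o : Y) {C : ℝ} (hC : 1 ≤ C) {f : ℝ → Y}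
    (hray : ∀ s t : ℝ, 0 ≤ s → 0 ≤ t → dist (f s) (f t) = |s - t|)
    (hcontr : IsContractingSet C (f '' Set.Ici (0:ℝ)))
    {η : C(Y, ℝ)} (hη : η ∈ horoCpt Y o)
    {K : ℝ} (hK : ∀ x, |η x - (rayh f x - rayh f o)| ≤ K) (z : Y) :
    rayh f z + rayL f η - 2*C ≤ η z := by
  have hC0 : (0:ℝ) < C := lt_of_lt_of_le one_pos hC
  obtain ⟨a, ha0, hza, _⟩ := exists_proj f hray z
  have claim : ∀ τ : ℝ, a + 1 ≤ τ → rayh f z + (η (f τ) + τ) - 2*C ≤ η z := by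
    intro τ hτ
    have hτ0 : 0 ≤ τ := by linarith
    have key : ∀ ε : ℝ, 0 < ε → ε ≤ 1 →
        rayh f z + (η (f τ) + τ) - 2*C ≤ η z + 2*ε := by
      intro ε hε hε1
      set d₀ := dist o (f 0) with hd₀
      have hd₀0 : 0 ≤ d₀ := dist_nonneg
      set τ' := τ + 5*C + d₀ + |K| + |rayh f o| + 1 with hτ'def
      have hττ' : τ + 2*C ≤ τ' := by
        have := abs_nonneg K
        have := abs_nonneg (rayh f o)
        linarith
      have hτ'0 : 0 ≤ τ' := by linarith
      obtain ⟨y, hy1, hy2, hy3⟩ := horo_approx o hη z (f τ) (f τ') hε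
      obtain ⟨s, hs0, hys, hyd⟩ := exists_proj f hray y
      have hy1' := abs_le.mp hy1
      have hy2' := abs_le.mp hy2
      have hy3' := abs_le.mp hy3
      have hsτ : τ + C ≤ s := by
        by_contra hlt
        push_neg at hlt
        have hS := dist_ray_lower hY hC hray hcontr hs0 hys
          (show s + C ≤ τ' by linarith)
        have hb2 : dist o y ≤ d₀ + s + Metric.infDist y (f '' Set.Ici (0:ℝ)) := by
          have u1 := dist_triangle o (f s) y
          have u2 := dist_triangle o (f 0) (f s)
          have u3 : dist (f 0) (f s) = s := by
            rw [hray 0 s le_rfl hs0, zero_sub, abs_neg, abs_of_nonneg hs0]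
          have u4 : dist (f s) y = dist y (f s) := dist_comm _ _
          rw [hyd] at u4
          linarith
        have hb4 : η (f τ') ≤ -τ' - rayh f o + K := by
          have h5 := (abs_le.mp (hK (f τ'))).2
          rw [rayh_ray f hray hτ'0] at h5
          linarith
        have hcomm : dist (f τ') y = dist y (f τ') := dist_comm _ _
        have hK1 : K ≤ |K| := le_abs_self K
        have hK2 : -|rayh f o| ≤ rayh f o := neg_abs_le _
        linarith [hy3'.2]
      have hsa : a + C < s := by linarith
      obtain ⟨σ, hτσ, hσ0, hG⟩ :=
        geod_exists_near hY hC hray hcontr ha0 hza hs0 hys hτ0 hsa hsτ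
      have hmono : τ + dist (f τ) y ≤ σ + dist (f σ) y := by
        have u1 := dist_triangle (f τ) (f σ) y
        have u2 : dist (f τ) (f σ) = σ - τ := by
          rw [hray τ σ hτ0 hσ0, abs_of_nonpos (by linarith)]; ring
        linarith
      have hrz : rayh f z ≤ dist z (f σ) - σ := rayh_le f hray z hσ0
      have hc1 : dist (f τ) y = dist (f τ) y := rfl
      linarith [hy1'.1, hy2'.1]
    have h6 : ∀ ε : ℝ, 0 < ε → rayh f z + (η (f τ) + τ) - 2*C ≤ η z + ε := by
      intro ε hε
      have hmin : 0 < min (ε/2) 1 := lt_min (by linarith) one_pos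
      have h7 := key (min (ε/2) 1) hmin (min_le_right _ _)
      have h8 : 2 * min (ε/2) 1 ≤ ε := by
        have := min_le_left (ε/2) 1
        linarith
      linarith
    exact le_of_forall_pos_le_add h6
  have h2 : Filter.Tendsto
      (fun t : ℝ => rayh f z + (η (f (max t 0)) + max t 0) - 2*C)
      atTop (𝓝 (rayh f z + rayL f η - 2*C)) :=
    (tendsto_const_nhds.add (rayL_tendsto o hray hη hK)).sub tendsto_const_nhds
  refine le_of_tendsto h2 ?_
  filter_upwards [eventually_ge_atTop (a + 1)] with t ht
  have ht0 : 0 ≤ t := by linarith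
  rw [max_eq_left ht0]
  exact claim t ht

lemma busemann_continuous (o : Y) : Continuous (busemannCM o : Y → C(Y, ℝ)) := by
  refine ContinuousMap.continuous_of_continuous_uncurry _ ?_
  show Continuous fun p : Y × Y => dist p.2 p.1 - dist o p.1
  exact (continuous_snd.dist continuous_fst).sub (continuous_const.dist continuous_fst)

lemma acc_val {f : ℝ → Y}
    (hray : ∀ s t : ℝ, 0 ≤ s → 0 ≤ t → dist (f s) (f t) = |s - t|)
    (o : Y) {ξ : C(Y, ℝ)} (hξ : IsHoroPoint o ξ) {t : ℕ → ℝ} (ht0 : ∀ n, 0 ≤ t n)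
    (hconv : HoroConv o (fun n => f (t n)) ξ) (x : Y) :
    ξ x = rayh f x - rayh f o := by
  have hev : ∀ z : Y, Filter.Tendsto (fun n => dist z (f (t n)) - dist o (f (t n)))
      atTop (𝓝 (ξ z)) := by
    intro z
    have h1 : Filter.Tendsto (fun n => (busemannCM o (f (t n))) z) atTop (𝓝 (ξ z)) :=
      ((ContinuousEvalConst.continuous_eval_const z).tendsto ξ).comp hconv
    simpa [busemannCM] using h1
  have hunbdd : ¬ BddAbove (Set.range t) := by
    rintro ⟨M, hM⟩
    have hmem : ∀ n, f (t n) ∈ f '' Set.Icc 0 M := fun n =>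
      ⟨t n, ⟨ht0 n, hM ⟨n, rfl⟩⟩, rfl⟩
    have hcompact : IsCompact (f '' Set.Icc 0 M) := by
      have heq : f '' Set.Icc 0 M = (f '' Set.Ici 0) ∩ Metric.closedBall (f 0) M := by
        ext w
        constructor
        · rintro ⟨r, ⟨hr0, hrM⟩, rfl⟩
          refine ⟨⟨r, hr0, rfl⟩, ?_⟩
          rw [Metric.mem_closedBall, hray r 0 hr0 le_rfl, sub_zero, abs_of_nonneg hr0]
          exact hrM
        · rintro ⟨⟨r, hr0, rfl⟩, hball⟩
          refine ⟨r, ⟨hr0, ?_⟩, rfl⟩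
          rw [Metric.mem_closedBall, hray r 0 hr0 le_rfl, sub_zero,
            abs_of_nonneg hr0] at hball
          exact hball
      rw [heq]
      exact IsCompact.of_isClosed_subset (isCompact_closedBall _ _)
        ((ray_isClosed f hray).inter Metric.isClosed_closedBall) Set.inter_subset_right
    obtain ⟨w, _, φ, hφ, hwconv⟩ := hcompact.tendsto_subseq hmem
    have h1 : Filter.Tendsto (fun k => busemannCM o (f (t (φ k)))) atTop
        (𝓝 (busemannCM o w)) := ((busemann_continuous o).tendsto w).comp hwconv
    have h2 : Filter.Tendsto (fun k => busemannCM o (f (t (φ k)))) atTop (𝓝 ξ) :=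
      hconv.comp hφ.tendsto_atTop
    exact hξ.2 w (tendsto_nhds_unique h2 h1)
  have hfreq : ∀ n : ℕ, ∃ᶠ k in atTop, (n : ℝ) ≤ t k := by
    intro n
    rw [Filter.frequently_atTop]
    intro m
    by_contra hcon
    push_neg at hcon
    apply hunbdd
    have hsub : Set.range t ⊆ (t '' {k | k < m}) ∪ Set.Iio (n : ℝ) := by
      rintro _ ⟨k, rfl⟩
      rcases lt_or_ge k m with hk | hk
      · exact Or.inl ⟨k, hk, rfl⟩
      · exact Or.inr (hcon k hk)
    exact (((Set.finite_Iio m).image t).bddAbove.union bddAbove_Iio).mono hsub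
  obtain ⟨φ, hφmono, hφprop⟩ := Filter.extraction_forall_of_frequently hfreq
  have htφ : Filter.Tendsto (fun k => t (φ k)) atTop atTop :=
    tendsto_atTop_mono hφprop tendsto_natCast_atTop_atTop
  have hx : Filter.Tendsto (fun k => dist x (f (t (φ k))) - dist o (f (t (φ k))))
      atTop (𝓝 (rayh f x - rayh f o)) := by
    have gx : Filter.Tendsto
        (fun k => dist x (f (max (t (φ k)) 0)) - max (t (φ k)) 0) atTop
        (𝓝 (rayh f x)) := (rayh_tendsto f hray x).comp htφ
    have go : Filter.Tendsto
        (fun k => dist o (f (max (t (φ k)) 0)) - max (t (φ k)) 0) atTop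
        (𝓝 (rayh f o)) := (rayh_tendsto f hray o).comp htφ
    have hsub := gx.sub go
    refine hsub.congr fun k => ?_
    rw [max_eq_left (ht0 (φ k))]
    ring
  have hx2 : Filter.Tendsto (fun k => dist x (f (t (φ k))) - dist o (f (t (φ k))))
      atTop (𝓝 (ξ x)) := (hev x).comp hφmono.tendsto_atTop
  exact tendsto_nhds_unique hx2 hx

end Statement1Aux

/-- all accumulation points of a `C`-contracting geodesic ray in `∂_h Y`
lie in a single finite-difference class, and any two points of the locus of this set
of accumulation points differ by at most `4C` in sup norm. -/
theorem statement1 {Y : Type*} [MetricSpace Y] [ProperSpace Y]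
    (hY : GeodesicSpace Y) (o : Y) (C : ℝ) (hC : 1 ≤ C)
    (f : ℝ → Y) (hray : ∀ s t : ℝ, 0 ≤ s → 0 ≤ t → dist (f s) (f t) = |s - t|)
    (hcontr : IsContractingSet C (f '' Set.Ici (0 : ℝ)))
    (Acc : Set C(Y, ℝ))
    (hAcc : Acc = {ξ : C(Y, ℝ) | IsHoroPoint o ξ ∧
        ∃ t : ℕ → ℝ, (∀ n, 0 ≤ t n) ∧ HoroConv o (fun n => f (t n)) ξ}) :
    (∀ ξ ∈ Acc, ∀ η ∈ Acc, FinDiff ξ η) ∧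
    (∀ ξ ∈ locus o Acc, ∀ η ∈ locus o Acc, ∀ z : Y, |ξ z - η z| ≤ 4 * C) := by
  subst hAcc
  have hC0 : (0:ℝ) < C := lt_of_lt_of_le one_pos hC
  have hAccVal : ∀ ξ' ∈ {ξ : C(Y, ℝ) | IsHoroPoint o ξ ∧
      ∃ t : ℕ → ℝ, (∀ n, 0 ≤ t n) ∧ HoroConv o (fun n => f (t n)) ξ},
      ∀ x : Y, ξ' x = rayh f x - rayh f o := by
    rintro ξ' ⟨hhp, t, ht0, hconv⟩ x
    exact acc_val hray o hhp ht0 hconv x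
  constructor
  · intro ξ hξ η hη
    exact ⟨0, fun z => by rw [hAccVal ξ hξ z, hAccVal η hη z]; simp⟩
  · rintro ξ ⟨hξhp, ξ₀, hξ₀, Kξ, hKξ⟩ η ⟨hηhp, η₀, hη₀, Kη, hKη⟩ z
    have hKξ' : ∀ x, |ξ x - (rayh f x - rayh f o)| ≤ Kξ := fun x => by
      rw [← hAccVal ξ₀ hξ₀ x, abs_sub_comm]
      exact hKξ x
    have hKη' : ∀ x, |η x - (rayh f x - rayh f o)| ≤ Kη := fun x => by
      rw [← hAccVal η₀ hη₀ x, abs_sub_comm]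
      exact hKη x
    have hξc : ξ ∈ horoCpt Y o := hξhp.1
    have hηc : η ∈ horoCpt Y o := hηhp.1
    have A1 := horo_upper o hray hξc hKξ' z
    have A2 := horo_lower hY o hC hray hcontr hξc hKξ' z
    have A3 := horo_upper o hray hξc hKξ' o
    have A4 := horo_lower hY o hC hray hcontr hξc hKξ' o
    have B1 := horo_upper o hray hηc hKη' z
    have B2 := horo_lower hY o hC hray hcontr hηc hKη' z
    have B3 := horo_upper o hray hηc hKη' o
    have B4 := horo_lower hY o hC hray hcontr hηc hKη' o
    rw [horo_eval_basept o hξc] at A3 A4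
    rw [horo_eval_basept o hηc] at B3 B4
    rw [abs_le]
    constructor <;> linarith

end ConfDyn
end
end
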